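/- Let l : ℝ → ℝ be bounded and differentiable with bounded derivative, and φ : ℝ → ℝ be C¹ with C_φ = ∫|φ| < ∞ and C'_φ = sup over choices tₙ ∈ [nτ,(n+1)τ] of Σₙ |φ'(t - tₙ)| < ∞. Then for the Riemann-sum approximation of the convolution, |τ Σₙ l(nτ) φ(t - nτ) - ∫ l(u) φ(t - u) du| ≤ ‖l'‖_∞ τ C_φ + ‖l‖_∞ τ² C'_φ for every t. -/

import Mathlib

/-!
Split the integral along the grid intervals `[nτ, (n+1)τ]`; the Riemann sum samples each at its
right endpoint. On one interval, freezing `l` at the endpoint costs at most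
`‖l'‖_∞ τ ∫|φ(t - u)| du`, and the rectangle rule for `u ↦ φ(t - u)` is exact up to
`τ² |φ'(t - uₙ)|` for some `uₙ` in the interval (mean value theorem for `∫ₐˣ g - (x - a) g(x)`).
Summing gives the bound, once the points `uₙ` are known to give a summable series: `tsum` of a
non-summable family is `0`, so the hypothesis on `C'` only bounds summable choices. A summable
choice exists because `φ` is integrable: on an interval of length `τ` some point has
`τ² |φ'| ≤ 9 ∫ |φ|`, and the finite sums of any choice are then bounded by `C'` after patching it
into that one.
-/

open MeasureTheory Set

theorem MeasureTheory.Integrable.hasSum_intervalIntegral_mul {E : Type*} [NormedAddCommGroup E]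
    [NormedSpace ℝ E] {μ : Measure ℝ} {f : ℝ → E} (hf : Integrable f μ) {τ : ℝ} (hτ : 0 < τ) :
    HasSum (fun n : ℤ => ∫ x in n * τ..(n + 1) * τ, f x ∂μ) (∫ x, f x ∂μ) := by
  have h := hasSum_integral_iUnion (fun n : ℤ => measurableSet_Ioc)
    (pairwise_disjoint_Ioc_zsmul τ) (by rw [iUnion_Ioc_zsmul hτ]; exact hf.integrableOn)
  rw [iUnion_Ioc_zsmul hτ, setIntegral_univ] at h
  convert h using 2 with n
  rw [intervalIntegral.integral_of_le (by gcongr; linarith)]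
  push_cast [zsmul_eq_mul]
  rfl

theorem exists_mem_Icc_abs_mul_le_integral_abs {h : ℝ → ℝ} (hh : Continuous h) {a b : ℝ}
    (hab : a ≤ b) : ∃ x ∈ Icc a b, |h x| * (b - a) ≤ ∫ u in a..b, |h u| := by
  obtain ⟨x, hx, hmin⟩ :=
    isCompact_Icc.exists_isMinOn (nonempty_Icc.2 hab) hh.abs.continuousOn
  refine ⟨x, hx, ?_⟩
  simpa [mul_comm] using intervalIntegral.integral_mono_on hab
    (intervalIntegrable_const (μ := volume)) (hh.abs.intervalIntegrable a b) (isMinOn_iff.1 hmin)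

theorem exists_mem_Icc_sq_mul_abs_deriv_le {h h' : ℝ → ℝ} (hd : ∀ x, HasDerivAt h (h' x) x)
    {a b : ℝ} (hab : a < b) : ∃ c ∈ Icc a b, (b - a) ^ 2 * |h' c| ≤ 9 * ∫ u in a..b, |h u| := by
  have hh : Continuous h := continuous_iff_continuousAt.2 fun x => (hd x).continuousAt
  have hint : ∀ x y, IntervalIntegrable (fun u => |h u|) volume x y :=
    hh.abs.intervalIntegrable
  -- the mean value theorem between minimisers of `|h|` on the outer thirds of `[a, b]`
  set d := (b - a) / 3 with hd_def
  have hd0 : 0 < d := by positivity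
  obtain ⟨x, hx, hxI⟩ :=
    exists_mem_Icc_abs_mul_le_integral_abs hh (a := a) (b := a + d) (by linarith)
  obtain ⟨y, hy, hyI⟩ :=
    exists_mem_Icc_abs_mul_le_integral_abs hh (a := b - d) (b := b) (by linarith)
  have hxy : x < y := by linarith [hx.2, hy.1]
  obtain ⟨c, hc, hslope⟩ := exists_hasDerivAt_eq_slope h h' hxy hh.continuousOn
    (fun z _ => hd z)
  refine ⟨c, ⟨hx.1.trans hc.1.le, hc.2.le.trans hy.2⟩, ?_⟩
  have hslope_le : |h' c| * (y - x) ≤ |h x| + |h y| := by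
    rw [hslope, abs_div, abs_of_pos (sub_pos.2 hxy), div_mul_cancel₀ _ (sub_pos.2 hxy).ne']
    exact (abs_sub _ _).trans_eq (add_comm _ _)
  have hsplit : (∫ u in a..a + d, |h u|) + (∫ u in a + d..b - d, |h u|)
      + (∫ u in b - d..b, |h u|) = ∫ u in a..b, |h u| := by
    rw [intervalIntegral.integral_add_adjacent_intervals (hint _ _) (hint _ _),
      intervalIntegral.integral_add_adjacent_intervals (hint _ _) (hint _ _)]
  have hmid : 0 ≤ ∫ u in a + d..b - d, |h u| :=
    intervalIntegral.integral_nonneg (by linarith) fun u _ => abs_nonneg _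
  have hgap : d ≤ y - x := by linarith [hx.2, hy.1]
  have hslope_d : |h' c| * d * d ≤ (|h x| + |h y|) * d := by
    gcongr
    exact (mul_le_mul_of_nonneg_left hgap (abs_nonneg _)).trans hslope_le
  have hba : b - a = 3 * d := by rw [hd_def]; ring
  simp only [add_sub_cancel_left, sub_sub_cancel] at hxI hyI
  rw [hba]
  nlinarith

theorem exists_mem_Icc_summable_abs_deriv {h h' : ℝ → ℝ} (hd : ∀ x, HasDerivAt h (h' x) x)
    (hh : Integrable h) {τ : ℝ} (hτ : 0 < τ) :
    ∃ u : ℤ → ℝ, (∀ n : ℤ, u n ∈ Icc ((n : ℝ) * τ) ((n + 1) * τ)) ∧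
      Summable fun n => |h' (u n)| := by
  choose u hu huJ using fun n : ℤ =>
    exists_mem_Icc_sq_mul_abs_deriv_le hd (a := n * τ) (b := (n + 1) * τ) (by gcongr; linarith)
  refine ⟨u, hu, Summable.of_nonneg_of_le (fun _ => abs_nonneg _) (fun n => ?_)
    (((hh.abs.hasSum_intervalIntegral_mul hτ).summable.mul_left (9 / τ ^ 2)))⟩
  rw [div_mul_eq_mul_div, le_div_iff₀' (by positivity)]
  simpa [show ((n : ℝ) + 1) * τ - n * τ = τ by ring] using huJ n

theorem exists_mem_Icc_abs_integral_sub_mul_le {h h' : ℝ → ℝ}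
    (hd : ∀ x, HasDerivAt h (h' x) x) {a b : ℝ} (hab : a < b) :
    ∃ c ∈ Icc a b, |(∫ u in a..b, h u) - (b - a) * h b| ≤ (b - a) ^ 2 * |h' c| := by
  have hh : Continuous h := continuous_iff_continuousAt.2 fun x => (hd x).continuousAt
  set G : ℝ → ℝ := fun x => (∫ u in a..x, h u) - (x - a) * h x
  have hG : ∀ x, HasDerivAt G (-((x - a) * h' x)) x := fun x => by
    have := (intervalIntegral.integral_hasDerivAt_right (hh.intervalIntegrable a x)
      hh.stronglyMeasurable.stronglyMeasurableAtFilter hh.continuousAt).sub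
      (((hasDerivAt_id x).sub_const a).mul (hd x))
    exact this.congr_deriv (by simp)
  obtain ⟨c, hc, hslope⟩ := exists_hasDerivAt_eq_slope G _ hab
    (continuous_iff_continuousAt.2 fun x => (hG x).continuousAt).continuousOn
    (fun x _ => hG x)
  refine ⟨c, Ioo_subset_Icc_self hc, ?_⟩
  have hGb : G b = -((c - a) * h' c) * (b - a) := by
    rw [hslope, div_mul_cancel₀ _ (sub_pos.2 hab).ne']
    simp [G]
  rw [show (∫ u in a..b, h u) - (b - a) * h b = G b from rfl, hGb, abs_mul, abs_neg, abs_mul,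
    abs_of_pos (sub_pos.2 hc.1), abs_of_pos (sub_pos.2 hab)]
  calc (c - a) * |h' c| * (b - a) ≤ (b - a) * |h' c| * (b - a) := by gcongr; exact hc.2.le
    _ = (b - a) ^ 2 * |h' c| := by ring

theorem abs_sub_le_mul_abs_sub_of_abs_deriv_le {l l' : ℝ → ℝ} {M : ℝ}
    (hd : ∀ x, HasDerivAt l (l' x) x) (hl' : ∀ x, |l' x| ≤ M) (x y : ℝ) :
    |l x - l y| ≤ M * |x - y| := by
  simpa only [Real.norm_eq_abs] using Convex.norm_image_sub_le_of_norm_hasDerivWithin_le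
    (fun z _ => (hd z).hasDerivWithinAt) (fun z _ => hl' z) convex_univ (mem_univ y) (mem_univ x)

theorem exists_mem_Icc_abs_integral_mul_sub_le {l l' h h' : ℝ → ℝ} {Ml Ml' a b : ℝ}
    (hld : ∀ x, HasDerivAt l (l' x) x) (hl' : ∀ x, |l' x| ≤ Ml') (hlb : |l b| ≤ Ml)
    (hd : ∀ x, HasDerivAt h (h' x) x) (hab : a < b) :
    ∃ c ∈ Icc a b, |(∫ u in a..b, l u * h u) - (b - a) * (l b * h b)|
      ≤ Ml' * (b - a) * (∫ u in a..b, |h u|) + Ml * (b - a) ^ 2 * |h' c| := by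
  have hh : Continuous h := continuous_iff_continuousAt.2 fun x => (hd x).continuousAt
  have hl : Continuous l := continuous_iff_continuousAt.2 fun x => (hld x).continuousAt
  obtain ⟨c, hc, hrect⟩ := exists_mem_Icc_abs_integral_sub_mul_le hd hab
  refine ⟨c, hc, ?_⟩
  have hsplit : (∫ u in a..b, l u * h u) - (b - a) * (l b * h b)
      = (∫ u in a..b, (l u - l b) * h u) + l b * ((∫ u in a..b, h u) - (b - a) * h b) := by
    have hint_sub : (∫ u in a..b, (l u - l b) * h u)
        = (∫ u in a..b, l u * h u) - l b * ∫ u in a..b, h u := by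
      simp only [sub_mul]
      rw [intervalIntegral.integral_sub (f := fun u => l u * h u) (g := fun u => l b * h u)
        ((hl.mul hh).intervalIntegrable a b) ((continuous_const.mul hh).intervalIntegrable a b),
        intervalIntegral.integral_const_mul]
    rw [hint_sub]
    ring
  have hfreeze : |∫ u in a..b, (l u - l b) * h u| ≤ Ml' * (b - a) * ∫ u in a..b, |h u| := by
    rw [← intervalIntegral.integral_const_mul]
    refine (intervalIntegral.abs_integral_le_integral_abs hab.le).trans
      (intervalIntegral.integral_mono_on hab.le
        (((hl.sub continuous_const).mul hh).abs.intervalIntegrable a b)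
        ((continuous_const.mul hh.abs).intervalIntegrable a b) fun x hx => ?_)
    rw [abs_mul]
    gcongr
    calc |l x - l b| ≤ Ml' * |x - b| := abs_sub_le_mul_abs_sub_of_abs_deriv_le hld hl' x b
      _ ≤ Ml' * (b - a) := by
        gcongr
        · exact (abs_nonneg _).trans (hl' 0)
        · rw [abs_sub_comm, abs_of_nonneg (by linarith [hx.2])]
          linarith [hx.1]
  have hMl : 0 ≤ Ml := (abs_nonneg _).trans hlb
  calc _ ≤ |∫ u in a..b, (l u - l b) * h u| + |l b| * |(∫ u in a..b, h u) - (b - a) * h b| := by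
        rw [hsplit, ← abs_mul]; exact abs_add_le _ _
    _ ≤ _ := by rw [mul_assoc Ml]; gcongr

theorem summable_and_tsum_le_of_forall_choice {ι α : Type*} {S : ι → Set α} {g : ι → α → ℝ}
    {C : ℝ} (hg : ∀ n x, 0 ≤ g n x) {u₀ : ι → α} (hu₀ : ∀ n, u₀ n ∈ S n)
    (hsum : Summable fun n => g n (u₀ n))
    (hC : ∀ u : ι → α, (∀ n, u n ∈ S n) → ∑' n, g n (u n) ≤ C) {c : ι → α}
    (hc : ∀ n, c n ∈ S n) : Summable (fun n => g n (c n)) ∧ ∑' n, g n (c n) ≤ C := by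
  classical
  have hfin : ∀ F : Finset ι, ∑ n ∈ F, g n (c n) ≤ C := fun F => by
    set v : ι → α := fun n => if n ∈ F then c n else u₀ n
    have hv : Summable fun n => g n (v n) := hsum.congr_cofinite <|
      F.eventually_cofinite_notMem.mono fun n hn => by simp [v, hn]
    calc ∑ n ∈ F, g n (c n) = ∑ n ∈ F, g n (v n) :=
          Finset.sum_congr rfl fun n hn => by simp [v, hn]
      _ ≤ ∑' n, g n (v n) := hv.sum_le_tsum F fun n _ => hg n _
      _ ≤ C := hC v fun n => by by_cases hn : n ∈ F <;> simp [v, hn, hc n, hu₀ n]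
  exact ⟨summable_of_sum_le (fun n => hg n _) hfin, Real.tsum_le_of_sum_le (fun n => hg n _) hfin⟩

theorem abs_tsum_sub_le_of_hasSum {ι : Type*} {f g e : ι → ℝ} {a : ℝ} (hf : HasSum f a)
    (hfg : ∀ n, |g n - f n| ≤ e n) (he : Summable e) : |∑' n, g n - a| ≤ ∑' n, e n := by
  have hgf : Summable (g - f) := he.of_norm_bounded hfg
  have hg : Summable g := by simpa using hgf.add hf.summable
  rw [← hf.tsum_eq, ← hg.tsum_sub hf.summable]
  exact tsum_of_norm_bounded (f := fun n => g n - f n) he.hasSum hfg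

theorem riemann_sum_convolution_error (l l' φ φ' : ℝ → ℝ) (τ Ml Ml' Cφ C' : ℝ)
    (hτ : 0 < τ)
    (hl : ∀ x, |l x| ≤ Ml) (hlderiv : ∀ x, HasDerivAt l (l' x) x)
    (hl' : ∀ x, |l' x| ≤ Ml')
    (hφderiv : ∀ x, HasDerivAt φ (φ' x) x)
    (hφ : Integrable φ) (hCφ : Cφ = ∫ u, |φ u|)
    (hC' : ∀ (t : ℝ) (u : ℤ → ℝ), (∀ n : ℤ, u n ∈ Set.Icc ((n : ℝ) * τ) ((n + 1) * τ)) →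
      (∑' n : ℤ, |φ' (t - u n)|) ≤ C') :
    ∀ t, |τ * (∑' n : ℤ, l (n * τ) * φ (t - n * τ)) - ∫ u, l u * φ (t - u)|
      ≤ Ml' * τ * Cφ + Ml * τ ^ 2 * C' := by
  intro t
  have hder (u : ℝ) : HasDerivAt (fun u => φ (t - u)) (-φ' (t - u)) u :=
    ((hφderiv (t - u)).comp u ((hasDerivAt_id u).const_sub t)).congr_deriv (by simp)
  have hJ : HasSum (fun n : ℤ => ∫ u in n * τ..(n + 1) * τ, |φ (t - u)|) Cφ := by
    rw [hCφ, ← integral_sub_left_eq_self (fun u => |φ u|) volume t]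
    exact (hφ.comp_sub_left t).abs.hasSum_intervalIntegral_mul hτ
  have hlφ : Integrable fun u => l u * φ (t - u) :=
    (hφ.comp_sub_left t).bdd_mul (continuous_iff_continuousAt.2 fun x =>
      (hlderiv x).continuousAt).aestronglyMeasurable (.of_forall hl)
  choose c hc hcerr using fun n : ℤ => exists_mem_Icc_abs_integral_mul_sub_le hlderiv hl'
    (hl _) hder (a := n * τ) (b := (n + 1) * τ) (by gcongr; linarith)
  obtain ⟨u₀, hu₀, hu₀sum⟩ := exists_mem_Icc_summable_abs_deriv hder (hφ.comp_sub_left t) hτ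
  obtain ⟨hcsum, hcC'⟩ := summable_and_tsum_le_of_forall_choice
    (g := fun _ x => |φ' (t - x)|) (fun _ _ => abs_nonneg _) hu₀ (by simpa using hu₀sum)
    (hC' t) hc
  have herr := abs_tsum_sub_le_of_hasSum (hlφ.hasSum_intervalIntegral_mul hτ)
    (g := fun n : ℤ => τ * (l ((n + 1) * τ) * φ (t - (n + 1) * τ)))
    (fun n => by simpa [show ((n : ℝ) + 1) * τ - n * τ = τ by ring, abs_sub_comm] using hcerr n)
    ((hJ.summable.mul_left (Ml' * τ)).add (hcsum.mul_left (Ml * τ ^ 2)))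
  rw [(hJ.summable.mul_left _).tsum_add (hcsum.mul_left _), tsum_mul_left, tsum_mul_left,
    hJ.tsum_eq, tsum_mul_left] at herr
  rw [← (Equiv.addRight (1 : ℤ)).tsum_eq]
  have hMl : 0 ≤ Ml := (abs_nonneg _).trans (hl 0)
  calc _ ≤ Ml' * τ * Cφ + Ml * τ ^ 2 * ∑' n : ℤ, |φ' (t - c n)| := by simpa using herr
    _ ≤ _ := by gcongr
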